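/- arXiv:math/0601761 — 3 statements merged into one kernel-verified Lean document; each statement's English description precedes it below -/
import Mathlib

section
/- Let (A, ∘, ρ, ⟨·,·⟩) be a Courant algebroid and N a (1,1)-tensor with Δ = N + N*. If Δ commutes with left multiplication (X∘ΔZ = Δ(X∘Z)) and Δ(Y∘Y) = ΔY∘Y for all Y, then the contracted structure satisfies both Courant axioms: ρ(NX)⟨Y,Y⟩ = 2⟨X, Y∘_N Y⟩ and ρ(NX)⟨Y,Y⟩ = 2⟨X∘_N Y, Y⟩ for all X, Y. Conversely, if both contracted axioms hold for all X, Y, then Δ commutes with left multiplication and Δ(Y∘Y) = ΔY∘Y. -/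
/-!
Polarizing the two Courant axioms gives `ρ(X)⟨Y,Z⟩ = ⟨X∘Y,Z⟩ + ⟨X∘Z,Y⟩ = ⟨X, Y∘Z + Z∘Y⟩`.
With these, the first contracted axiom says exactly `Δ(Y∘Y) = NY∘Y + Y∘NY`, and the second that
the form `(Y,Z) ↦ ⟨X∘NY - N(X∘Y), Z⟩` is alternating. The symmetrization of that form is
`⟨X∘ΔZ - Δ(X∘Z), Y⟩`, so by nondegeneracy it is alternating iff `Δ` commutes with left
multiplication. Finally `ΔY∘Y + Y∘ΔY = 2(NY∘Y + Y∘NY)`, since `⟨ΔY,Y⟩ = 2⟨NY,Y⟩`; hence once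
`Y∘ΔY = Δ(Y∘Y)`, the conditions `Δ(Y∘Y) = ΔY∘Y` and `Δ(Y∘Y) = NY∘Y + Y∘NY` coincide.
-/

section Polarization

variable {A F : Type*} [AddCommGroup A] [Module ℝ A] [AddCommGroup F] [Module ℝ F]

theorem eq_add_swap_of_apply_self_eq_two_smul {β γ : A →ₗ[ℝ] A →ₗ[ℝ] F}
    (hβ : ∀ Y Z, β Y Z = β Z Y) (h : ∀ Y, β Y Y = (2 : ℝ) • γ Y Y) (Y Z : A) :
    β Y Z = γ Y Z + γ Z Y := by
  have hYZ := h (Y + Z)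
  simp only [map_add, LinearMap.add_apply, h, hβ Z Y] at hYZ
  rw [← smul_right_inj (two_ne_zero' ℝ)]
  linear_combination (norm := module) hYZ

end Polarization

section CourantAlgebroid

variable {A F : Type*} [AddCommGroup A] [Module ℝ A] [AddCommGroup F] [Module ℝ F]
  {m : A →ₗ[ℝ] A →ₗ[ℝ] A} {B : A →ₗ[ℝ] A →ₗ[ℝ] F} {ρ : A →ₗ[ℝ] F →ₗ[ℝ] F}

/-- The contracted product `X ∘_N Y`. -/
def contractedProduct (m : A →ₗ[ℝ] A →ₗ[ℝ] A) (N : A →ₗ[ℝ] A) (X Y : A) : A :=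
  m (N X) Y + m X (N Y) - N (m X Y)

theorem eq_of_forall_pairing_eq (hsym : ∀ X Y : A, B X Y = B Y X)
    (hnondeg : ∀ a : A, (∀ b : A, B a b = 0) → a = 0) {v w : A}
    (h : ∀ X, B X v = B X w) : v = w :=
  sub_eq_zero.mp <| hnondeg _ fun X => by rw [hsym, map_sub, h, sub_self]

theorem anchor_pairing_eq_pairing_mul_left (hsym : ∀ X Y : A, B X Y = B Y X)
    (h5 : ∀ X Y : A, ρ X (B Y Y) = (2 : ℝ) • B (m X Y) Y) (X Y Z : A) :
    ρ X (B Y Z) = B (m X Y) Z + B (m X Z) Y :=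
  eq_add_swap_of_apply_self_eq_two_smul (β := B.compr₂ (ρ X)) (γ := B ∘ₗ m X)
    (fun Y Z => by simp [hsym Y Z]) (h5 X) Y Z

theorem anchor_pairing_eq_pairing_mul_right (hsym : ∀ X Y : A, B X Y = B Y X)
    (h4 : ∀ X Y : A, ρ X (B Y Y) = (2 : ℝ) • B X (m Y Y)) (X Y Z : A) :
    ρ X (B Y Z) = B X (m Y Z) + B X (m Z Y) :=
  eq_add_swap_of_apply_self_eq_two_smul (β := B.compr₂ (ρ X)) (γ := m.compr₂ (B X))
    (fun Y Z => by simp [hsym Y Z]) (h4 X) Y Z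

-- `N + Ns` is the paper's `Δ = N + N*`.
variable {N Ns : A →ₗ[ℝ] A}

theorem pairing_delta_apply_self (hsym : ∀ X Y : A, B X Y = B Y X)
    (hadj : ∀ X Y : A, B (N X) Y = B X (Ns Y)) (Y : A) :
    B ((N + Ns) Y) Y = (2 : ℝ) • B (N Y) Y := by
  rw [LinearMap.add_apply, map_add, LinearMap.add_apply, hsym (Ns Y), ← hadj, two_smul]

theorem delta_mul_add_mul_delta (hsym : ∀ X Y : A, B X Y = B Y X)
    (hnondeg : ∀ a : A, (∀ b : A, B a b = 0) → a = 0)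
    (h4 : ∀ X Y : A, ρ X (B Y Y) = (2 : ℝ) • B X (m Y Y))
    (hadj : ∀ X Y : A, B (N X) Y = B X (Ns Y)) (Y : A) :
    m ((N + Ns) Y) Y + m Y ((N + Ns) Y) = (2 : ℝ) • (m (N Y) Y + m Y (N Y)) := by
  refine eq_of_forall_pairing_eq hsym hnondeg fun X => ?_
  calc B X (m ((N + Ns) Y) Y + m Y ((N + Ns) Y))
      = ρ X (B ((N + Ns) Y) Y) := by
        rw [map_add, anchor_pairing_eq_pairing_mul_right hsym h4]
    _ = (2 : ℝ) • ρ X (B (N Y) Y) := by rw [pairing_delta_apply_self hsym hadj, map_smul]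
    _ = B X ((2 : ℝ) • (m (N Y) Y + m Y (N Y))) := by
        rw [anchor_pairing_eq_pairing_mul_right hsym h4, map_smul, map_add]

theorem pairing_delta_commutator (hsym : ∀ X Y : A, B X Y = B Y X)
    (h5 : ∀ X Y : A, ρ X (B Y Y) = (2 : ℝ) • B (m X Y) Y)
    (hadj : ∀ X Y : A, B (N X) Y = B X (Ns Y)) (X Y Z : A) :
    B (m X ((N + Ns) Z) - (N + Ns) (m X Z)) Y =
      B (m X (N Y) - N (m X Y)) Z + B (m X (N Z) - N (m X Z)) Y := by
  have hNY := anchor_pairing_eq_pairing_mul_left hsym h5 X (N Y) Z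
  have hNsZ := anchor_pairing_eq_pairing_mul_left hsym h5 X Y (Ns Z)
  rw [hadj, hsym (m X Z), hadj, hsym Y (Ns (m X Z))] at hNY
  simp only [map_add, map_sub, LinearMap.add_apply, LinearMap.sub_apply, hadj]
  linear_combination (norm := module) hNY - hNsZ

theorem contracted_axiom_left_iff (hsym : ∀ X Y : A, B X Y = B Y X)
    (hnondeg : ∀ a : A, (∀ b : A, B a b = 0) → a = 0)
    (h4 : ∀ X Y : A, ρ X (B Y Y) = (2 : ℝ) • B X (m Y Y))
    (hadj : ∀ X Y : A, B (N X) Y = B X (Ns Y)) :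
    (∀ X Y : A, ρ (N X) (B Y Y) = (2 : ℝ) • B X (contractedProduct m N Y Y)) ↔
      ∀ Y : A, (N + Ns) (m Y Y) = m (N Y) Y + m Y (N Y) := by
  have hNs : ∀ Y, Ns (m Y Y) = contractedProduct m N Y Y ↔
      (N + Ns) (m Y Y) = m (N Y) Y + m Y (N Y) := fun Y => by
    rw [contractedProduct, LinearMap.add_apply, eq_sub_iff_add_eq, add_comm]
  simp_rw [h4, hadj, smul_right_inj (two_ne_zero' ℝ), ← hNs]
  exact ⟨fun h Y => eq_of_forall_pairing_eq hsym hnondeg (h · Y), fun h X Y => by rw [h]⟩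

theorem contracted_axiom_right_iff (h5 : ∀ X Y : A, ρ X (B Y Y) = (2 : ℝ) • B (m X Y) Y) :
    (∀ X Y : A, ρ (N X) (B Y Y) = (2 : ℝ) • B (contractedProduct m N X Y) Y) ↔
      ∀ X Y : A, B (m X (N Y) - N (m X Y)) Y = 0 := by
  simp_rw [h5, smul_right_inj (two_ne_zero' ℝ), contractedProduct, add_sub_assoc, map_add,
    LinearMap.add_apply, left_eq_add]

theorem skew_commutator_iff_delta_commute (hsym : ∀ X Y : A, B X Y = B Y X)
    (hnondeg : ∀ a : A, (∀ b : A, B a b = 0) → a = 0)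
    (h5 : ∀ X Y : A, ρ X (B Y Y) = (2 : ℝ) • B (m X Y) Y)
    (hadj : ∀ X Y : A, B (N X) Y = B X (Ns Y)) :
    (∀ X Y : A, B (m X (N Y) - N (m X Y)) Y = 0) ↔
      ∀ X Z : A, m X ((N + Ns) Z) = (N + Ns) (m X Z) := by
  refine ⟨fun h X Z => sub_eq_zero.mp <| hnondeg _ fun Y => ?_, fun h X Y => ?_⟩
  · have hAlt : (B ∘ₗ (m X ∘ₗ N - N ∘ₗ m X)).IsAlt := fun Y => by simpa using h X Y
    have hSkew := hAlt.neg Z Y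
    simp only [LinearMap.comp_apply, LinearMap.sub_apply] at hSkew
    rw [pairing_delta_commutator hsym h5 hadj, ← hSkew, neg_add_cancel]
  · have hYY := pairing_delta_commutator hsym h5 hadj X Y Y
    rw [h, sub_self, map_zero, LinearMap.zero_apply, ← two_smul ℝ, eq_comm,
      smul_eq_zero] at hYY
    exact hYY.resolve_left two_ne_zero

theorem delta_mul_self_iff (hsym : ∀ X Y : A, B X Y = B Y X)
    (hnondeg : ∀ a : A, (∀ b : A, B a b = 0) → a = 0)
    (h4 : ∀ X Y : A, ρ X (B Y Y) = (2 : ℝ) • B X (m Y Y))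
    (hadj : ∀ X Y : A, B (N X) Y = B X (Ns Y))
    (hcomm : ∀ X Z : A, m X ((N + Ns) Z) = (N + Ns) (m X Z)) (Y : A) :
    (N + Ns) (m Y Y) = m ((N + Ns) Y) Y ↔ (N + Ns) (m Y Y) = m (N Y) Y + m Y (N Y) := by
  have hS := delta_mul_add_mul_delta hsym hnondeg h4 hadj Y
  rw [hcomm] at hS
  constructor <;> intro h
  · linear_combination (norm := module) (2 : ℝ)⁻¹ • (hS + h)
  · linear_combination (norm := module) (2 : ℝ) • h - hS

end CourantAlgebroid

theorem delta_conditions_iff_contracted_axioms_general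
    {A F : Type*} [AddCommGroup A] [Module ℝ A] [AddCommGroup F] [Module ℝ F]
    (m : A →ₗ[ℝ] A →ₗ[ℝ] A)           -- the Leibniz product ∘
    (B : A →ₗ[ℝ] A →ₗ[ℝ] F)           -- the pairing ⟨·,·⟩
    (ρ : A →ₗ[ℝ] F →ₗ[ℝ] F)           -- the anchor acting on scalars
    (hsym : ∀ X Y : A, B X Y = B Y X)
    (hnondeg : ∀ a : A, (∀ b : A, B a b = 0) → a = 0)
    (h4 : ∀ X Y : A, ρ X (B Y Y) = (2 : ℝ) • B X (m Y Y))
    (h5 : ∀ X Y : A, ρ X (B Y Y) = (2 : ℝ) • B (m X Y) Y)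
    (N Ns : A →ₗ[ℝ] A)
    (hadj : ∀ X Y : A, B (N X) Y = B X (Ns Y))
    (Δ : A →ₗ[ℝ] A) (hΔ : Δ = N + Ns)
    (cN : A → A → A)
    (hcN : ∀ X Y : A, cN X Y = m (N X) Y + m X (N Y) - N (m X Y)) :
    ((∀ X Z : A, m X (Δ Z) = Δ (m X Z)) ∧ (∀ Y : A, Δ (m Y Y) = m (Δ Y) Y)) ↔
    ((∀ X Y : A, ρ (N X) (B Y Y) = (2 : ℝ) • B X (cN Y Y)) ∧
     (∀ X Y : A, ρ (N X) (B Y Y) = (2 : ℝ) • B (cN X Y) Y)) := by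
  subst hΔ
  obtain rfl : cN = contractedProduct m N := funext₂ hcN
  rw [contracted_axiom_left_iff hsym hnondeg h4 hadj, contracted_axiom_right_iff h5,
    skew_commutator_iff_delta_commute hsym hnondeg h5 hadj]
  have hdiag := delta_mul_self_iff hsym hnondeg h4 hadj
  exact ⟨fun ⟨hcomm, hsq⟩ => ⟨fun Y => (hdiag hcomm Y).1 (hsq Y), hcomm⟩,
    fun ⟨hsq, hcomm⟩ => ⟨hcomm, fun Y => (hdiag hcomm Y).2 (hsq Y)⟩⟩

/-- For a Courant algebroid `(A, ∘, ρ, ⟨·,·⟩)` and a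
(1,1)-tensor `N` with `Δ = N + N*`: `Δ` commutes with left multiplication and
satisfies `Δ(Y∘Y) = ΔY∘Y` if and only if the contracted structure
(`∘_N`, `ρ_N = ρ∘N`) satisfies both Courant axioms
`ρ(NX)⟨Y,Y⟩ = 2⟨X, Y∘_N Y⟩` and `ρ(NX)⟨Y,Y⟩ = 2⟨X∘_N Y, Y⟩`. -/
theorem delta_conditions_iff_contracted_axioms
    {A F : Type*} [AddCommGroup A] [Module ℝ A] [AddCommGroup F] [Module ℝ F]
    (m : A →ₗ[ℝ] A →ₗ[ℝ] A)           -- the Leibniz product ∘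
    (B : A →ₗ[ℝ] A →ₗ[ℝ] F)           -- the pairing ⟨·,·⟩
    (ρ : A →ₗ[ℝ] F →ₗ[ℝ] F)           -- the anchor acting on scalars
    (jacobi : ∀ X Y Z : A, m (m X Y) Z = m X (m Y Z) - m Y (m X Z))
    (hsym : ∀ X Y : A, B X Y = B Y X)
    (hnondeg : ∀ a : A, (∀ b : A, B a b = 0) → a = 0)
    (h4 : ∀ X Y : A, ρ X (B Y Y) = (2 : ℝ) • B X (m Y Y))
    (h5 : ∀ X Y : A, ρ X (B Y Y) = (2 : ℝ) • B (m X Y) Y)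
    (N Ns : A →ₗ[ℝ] A)
    (hadj : ∀ X Y : A, B (N X) Y = B X (Ns Y))
    (Δ : A →ₗ[ℝ] A) (hΔ : Δ = N + Ns)
    (cN : A → A → A)
    (hcN : ∀ X Y : A, cN X Y = m (N X) Y + m X (N Y) - N (m X Y)) :
    ((∀ X Z : A, m X (Δ Z) = Δ (m X Z)) ∧ (∀ Y : A, Δ (m Y Y) = m (Δ Y) Y)) ↔
    ((∀ X Y : A, ρ (N X) (B Y Y) = (2 : ℝ) • B X (cN Y Y)) ∧
     (∀ X Y : A, ρ (N X) (B Y Y) = (2 : ℝ) • B (cN X Y) Y)) :=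
  delta_conditions_iff_contracted_axioms_general m B ρ hsym hnondeg h4 h5 N Ns hadj Δ hΔ cN hcN
end

section
/- Let (A, ∘, ρ, ⟨·,·⟩) be a Courant algebroid and N an orthogonal (N* = −N) Courant-Nijenhuis tensor, i.e. the Nijenhuis torsion Tor_N(X,Y) = NX∘NY − N(X∘_N Y) vanishes. Then N² commutes with left multiplication: X∘N²Y = N²(X∘Y) for all X, Y. -/
/-!
Polarized invariance of the pairing, `ρ X ⟨Y, Z⟩ = ⟨X ∘ Y, Z⟩ + ⟨Y, X ∘ Z⟩`, passes to the contracted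
product `∘_N` with anchor `ρ ∘ N` when `N` is skew. Pairing `N (X ∘_N Y) = NX ∘ NY` with `Z`
and moving `N` and the left multiplications across the pairing then shows that
`⟨X ∘_N NZ - N (NX ∘ Z), Y⟩` vanishes for all `Y`, so `X ∘_N NZ = N (NX ∘ Z)` by
nondegeneracy. Expanding both contracted products with the torsion identity leaves
`X ∘ N²Z = N² (X ∘ Z)`.
-/

namespace CourantAlgebroid

variable {R A F : Type*} [CommRing R] [AddCommGroup A] [Module R A] [AddCommGroup F] [Module R F]

def IsInvariantPairing (m : A →ₗ[R] A →ₗ[R] A) (ρ : A →ₗ[R] F →ₗ[R] F)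
    (B : A →ₗ[R] A →ₗ[R] F) : Prop :=
  ∀ X Y Z, ρ X (B Y Z) = B (m X Y) Z + B Y (m X Z)

def contractedProduct (m : A →ₗ[R] A →ₗ[R] A) (N : A →ₗ[R] A) : A →ₗ[R] A →ₗ[R] A :=
  m ∘ₗ N + m.compl₂ N - m.compr₂ N

@[simp]
theorem contractedProduct_apply (m : A →ₗ[R] A →ₗ[R] A) (N : A →ₗ[R] A) (X Y : A) :
    contractedProduct m N X Y = m (N X) Y + m X (N Y) - N (m X Y) :=
  rfl

variable {m : A →ₗ[R] A →ₗ[R] A} {ρ : A →ₗ[R] F →ₗ[R] F} {B : A →ₗ[R] A →ₗ[R] F}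
  {N : A →ₗ[R] A}

theorem isInvariantPairing_of_apply_self [Invertible (2 : R)] (hsym : ∀ X Y, B X Y = B Y X)
    (h : ∀ X Y, ρ X (B Y Y) = (2 : R) • B (m X Y) Y) : IsInvariantPairing m ρ B := by
  intro X Y Z
  have hYZ := h X (Y + Z)
  simp only [map_add, LinearMap.add_apply, smul_add, h X Y, h X Z, hsym Z Y, hsym (m X Z) Y]
    at hYZ
  apply (isUnit_of_invertible (2 : R)).smul_left_cancel.mp
  linear_combination (norm := module) hYZ

theorem IsInvariantPairing.contractedProduct (hinv : IsInvariantPairing m ρ B)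
    (horth : ∀ X Y, B (N X) Y = - B X (N Y)) :
    IsInvariantPairing (contractedProduct m N) (ρ ∘ₗ N) B := by
  intro X Y Z
  have h₁ := hinv (N X) Y Z
  have h₂ := hinv X (N Y) Z
  have h₃ := hinv X Y (N Z)
  simp only [LinearMap.comp_apply, contractedProduct_apply, map_add, map_sub,
    LinearMap.add_apply, LinearMap.sub_apply, horth Y Z, horth Y (m X Z), horth (m X Y) Z,
    map_neg] at h₂ ⊢
  linear_combination (norm := module) h₁ + h₂ + h₃

theorem contractedProduct_apply_map_eq (hinv : IsInvariantPairing m ρ B)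
    (horth : ∀ X Y, B (N X) Y = - B X (N Y)) (hnondeg : B.SeparatingLeft)
    (htor : ∀ X Y, m (N X) (N Y) = N (contractedProduct m N X Y)) (X Z : A) :
    contractedProduct m N X (N Z) = N (m (N X) Z) := by
  refine sub_eq_zero.mp (hnondeg _ fun Y => ?_)
  have h₁ := hinv.contractedProduct horth X (N Z) Y
  have h₂ := hinv (N X) Z (N Y)
  simp only [LinearMap.comp_apply, horth Z, htor, map_neg] at h₁ h₂
  rw [map_sub, LinearMap.sub_apply, horth]
  linear_combination (norm := module) -h₁ - h₂

theorem apply_map_map_eq_map_map_apply (hinv : IsInvariantPairing m ρ B)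
    (horth : ∀ X Y, B (N X) Y = - B X (N Y)) (hnondeg : B.SeparatingLeft)
    (htor : ∀ X Y, m (N X) (N Y) = N (contractedProduct m N X Y)) (X Y : A) :
    m X (N (N Y)) = N (N (m X Y)) := by
  have h := contractedProduct_apply_map_eq hinv horth hnondeg htor X Y
  rw [contractedProduct_apply, htor] at h
  simp only [contractedProduct_apply, map_add, map_sub] at h
  linear_combination (norm := module) h

end CourantAlgebroid

theorem nsq_commutes_of_orthogonal_nijenhuis_general
    {A F : Type*} [AddCommGroup A] [Module ℝ A] [AddCommGroup F] [Module ℝ F]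
    (m : A →ₗ[ℝ] A →ₗ[ℝ] A)           -- the Leibniz product ∘
    (B : A →ₗ[ℝ] A →ₗ[ℝ] F)           -- the pairing ⟨·,·⟩
    (ρ : A →ₗ[ℝ] F →ₗ[ℝ] F)           -- the anchor acting on scalars
    (hsym : ∀ X Y : A, B X Y = B Y X)
    (hnondeg : ∀ a : A, (∀ b : A, B a b = 0) → a = 0)
    (h5 : ∀ X Y : A, ρ X (B Y Y) = (2 : ℝ) • B (m X Y) Y)
    (N : A →ₗ[ℝ] A)
    (horth : ∀ X Y : A, B (N X) Y = - B X (N Y))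
    (cN : A → A → A)
    (hcN : ∀ X Y : A, cN X Y = m (N X) Y + m X (N Y) - N (m X Y))
    (torsion_zero : ∀ X Y : A, m (N X) (N Y) - N (cN X Y) = 0) :
    ∀ X Y : A, m X (N (N Y)) = N (N (m X Y)) := by
  have htor : ∀ X Y, m (N X) (N Y) = N (CourantAlgebroid.contractedProduct m N X Y) := by
    intro X Y
    rw [CourantAlgebroid.contractedProduct_apply, ← hcN]
    exact sub_eq_zero.mp (torsion_zero X Y)
  exact CourantAlgebroid.apply_map_map_eq_map_map_apply
    (CourantAlgebroid.isInvariantPairing_of_apply_self hsym h5) horth hnondeg htor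

/-- On a Courant algebroid, if `N` is an orthogonal (`N* = -N`)
Courant-Nijenhuis tensor (vanishing Nijenhuis torsion), then `N²` commutes
with left multiplication: `X∘N²Y = N²(X∘Y)`. -/
theorem nsq_commutes_of_orthogonal_nijenhuis
    {A F : Type*} [AddCommGroup A] [Module ℝ A] [AddCommGroup F] [Module ℝ F]
    (m : A →ₗ[ℝ] A →ₗ[ℝ] A)           -- the Leibniz product ∘
    (B : A →ₗ[ℝ] A →ₗ[ℝ] F)           -- the pairing ⟨·,·⟩
    (ρ : A →ₗ[ℝ] F →ₗ[ℝ] F)           -- the anchor acting on scalars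
    (jacobi : ∀ X Y Z : A, m (m X Y) Z = m X (m Y Z) - m Y (m X Z))
    (hsym : ∀ X Y : A, B X Y = B Y X)
    (hnondeg : ∀ a : A, (∀ b : A, B a b = 0) → a = 0)
    (h4 : ∀ X Y : A, ρ X (B Y Y) = (2 : ℝ) • B X (m Y Y))
    (h5 : ∀ X Y : A, ρ X (B Y Y) = (2 : ℝ) • B (m X Y) Y)
    (N : A →ₗ[ℝ] A)
    (horth : ∀ X Y : A, B (N X) Y = - B X (N Y))
    (cN : A → A → A)
    (hcN : ∀ X Y : A, cN X Y = m (N X) Y + m X (N Y) - N (m X Y))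
    (torsion_zero : ∀ X Y : A, m (N X) (N Y) - N (cN X Y) = 0) :
    ∀ X Y : A, m X (N (N Y)) = N (N (m X Y)) :=
  nsq_commutes_of_orthogonal_nijenhuis_general m B ρ hsym hnondeg h5 N horth cN hcN torsion_zero
end

section
/- Let (A, ∘, ρ, ⟨·,·⟩) be an irreducible Courant algebroid over ℝ and N a nonzero orthogonal (N* = −N) Courant-Nijenhuis tensor. Then N² = λ'I for some λ' ∈ ℝ, and consequently N is a positive scalar multiple of a tensor J with J² = −I, J² = I, or J² = 0 (a complex, product, or tangent Courant structure, respectively). -/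
/-! Write `H_X = ⁅L_X, N⁆` for the commutator of `N` with left multiplication `L_X = X ∘ ·`.
Invariance of the pairing and orthogonality of `N` make `⟨H_X Y, W⟩` skew in `Y, W`, and
vanishing torsion says `H_{NX} = N H_X`; together they force `H_{NX} + H_X N = 0`, that is,
`N²` commutes with every `L_X`. Torsion on the diagonal, where `NY ∘ Y + Y ∘ NY = 0`, and the
symmetric-part axiom give `N²(Y ∘ Y) = (N²Y) ∘ Y`. Irreducibility then makes `N² = λ'I`, and
rescaling `N` by `√|λ'|` normalises `λ'` to `-1`, `1` or `0`. -/

namespace CourantAlgebroid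

variable {R A F : Type*} [CommRing R] [AddCommGroup A] [Module R A] [AddCommGroup F] [Module R F]
  {m : A →ₗ[R] A →ₗ[R] A} {B : A →ₗ[R] A →ₗ[R] F} {ρ : A →ₗ[R] F →ₗ[R] F} {N : A →ₗ[R] A}

theorem apply_eq_add_swap_of_apply_self [Invertible (2 : R)] {Φ Ψ : A →ₗ[R] A →ₗ[R] F}
    (hΦ : ∀ Y Z, Φ Y Z = Φ Z Y) (h : ∀ Y, Φ Y Y = (2 : R) • Ψ Y Y) (Y Z : A) :
    Φ Y Z = Ψ Y Z + Ψ Z Y := by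
  apply (isUnit_of_invertible (2 : R)).smul_left_cancel.mp
  have hYZ := h (Y + Z)
  simp only [map_add, LinearMap.add_apply] at hYZ
  linear_combination (norm := module) hYZ - h Y - h Z + hΦ Y Z

theorem apply_self_eq_zero_of_skew [Invertible (2 : R)] (hsym : ∀ X Y, B X Y = B Y X)
    (horth : ∀ X Y, B (N X) Y = -B X (N Y)) (Y : A) : B (N Y) Y = 0 := by
  apply (isUnit_of_invertible (2 : R)).smul_left_cancel.mp
  linear_combination (norm := module) horth Y Y - hsym Y (N Y)

theorem eq_of_forall_pairing_eq (hnondeg : ∀ a, (∀ b, B a b = 0) → a = 0) {x y : A}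
    (h : ∀ W, B x W = B y W) : x = y :=
  sub_eq_zero.mp <| hnondeg _ fun W => by rw [map_sub, LinearMap.sub_apply, h, sub_self]

theorem mul_apply_add_mul_apply_eq_zero (hsym : ∀ X Y, B X Y = B Y X)
    (hnondeg : ∀ a, (∀ b, B a b = 0) → a = 0)
    (hsymPart : ∀ X Y Z, B X (m Y Z) + B X (m Z Y) = ρ X (B Y Z))
    (hiso : ∀ Y, B (N Y) Y = 0) (Y : A) : m (N Y) Y + m Y (N Y) = 0 :=
  hnondeg _ fun W => by rw [hsym _ W, map_add, hsymPart, hiso, map_zero]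

theorem pairing_lie_apply_swap (hsym : ∀ X Y, B X Y = B Y X)
    (hinv : ∀ X Y Z, B (m X Y) Z + B (m X Z) Y = ρ X (B Y Z))
    (horth : ∀ X Y, B (N X) Y = -B X (N Y)) (X Y W : A) :
    B (⁅m X, N⁆ Y) W = -B (⁅m X, N⁆ W) Y := by
  have hskew : B (N Y) W + B (N W) Y = 0 := by
    linear_combination (norm := module) horth Y W - hsym Y (N W)
  have hρ := congrArg (ρ X) hskew
  rw [map_add, map_zero] at hρ
  simp only [Ring.lie_def, LinearMap.sub_apply, Module.End.mul_apply, map_sub]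
  linear_combination (norm := module) hinv X (N Y) W + hinv X (N W) Y - horth (m X Y) W
    - horth (m X W) Y + hρ

theorem lie_mul_apply_eq_mul_lie
    (htors : ∀ X Y, m (N X) (N Y) = N (m (N X) Y + m X (N Y) - N (m X Y))) (X : A) :
    ⁅m (N X), N⁆ = N * ⁅m X, N⁆ := by
  ext Y
  have h := htors X Y
  simp only [map_sub, map_add] at h
  simp only [Ring.lie_def, LinearMap.sub_apply, Module.End.mul_apply, map_sub]
  linear_combination (norm := module) h

theorem lie_mul_apply_add_lie_mul_eq_zero (hsym : ∀ X Y, B X Y = B Y X)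
    (hnondeg : ∀ a, (∀ b, B a b = 0) → a = 0)
    (hinv : ∀ X Y Z, B (m X Y) Z + B (m X Z) Y = ρ X (B Y Z))
    (horth : ∀ X Y, B (N X) Y = -B X (N Y))
    (htors : ∀ X Y, m (N X) (N Y) = N (m (N X) Y + m X (N Y) - N (m X Y))) (X : A) :
    ⁅m (N X), N⁆ + ⁅m X, N⁆ * N = 0 := by
  ext Z
  refine hnondeg _ fun Y => ?_
  have key : B (⁅m (N X), N⁆ Z) Y = -B (⁅m X, N⁆ (N Z)) Y :=
    calc B (⁅m (N X), N⁆ Z) Y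
        = -B (⁅m (N X), N⁆ Y) Z := pairing_lie_apply_swap hsym hinv horth _ _ _
      _ = -B (N (⁅m X, N⁆ Y)) Z := by rw [lie_mul_apply_eq_mul_lie htors]; rfl
      _ = B (⁅m X, N⁆ Y) (N Z) := by rw [horth, neg_neg]
      _ = -B (⁅m X, N⁆ (N Z)) Y := pairing_lie_apply_swap hsym hinv horth _ _ _
  simp only [LinearMap.add_apply, Module.End.mul_apply, map_add, key,
    neg_add_cancel]

theorem lie_mul_sq_eq_zero (hsym : ∀ X Y, B X Y = B Y X)
    (hnondeg : ∀ a, (∀ b, B a b = 0) → a = 0)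
    (hinv : ∀ X Y Z, B (m X Y) Z + B (m X Z) Y = ρ X (B Y Z))
    (horth : ∀ X Y, B (N X) Y = -B X (N Y))
    (htors : ∀ X Y, m (N X) (N Y) = N (m (N X) Y + m X (N Y) - N (m X Y))) (X : A) :
    ⁅m X, N * N⁆ = 0 := by
  have h := lie_mul_apply_add_lie_mul_eq_zero hsym hnondeg hinv horth htors X
  rw [lie_mul_apply_eq_mul_lie htors] at h
  rw [← h]
  simp only [Ring.lie_def]
  noncomm_ring

theorem mul_apply_sq_apply_comm (hsym : ∀ X Y, B X Y = B Y X)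
    (hnondeg : ∀ a, (∀ b, B a b = 0) → a = 0)
    (hinv : ∀ X Y Z, B (m X Y) Z + B (m X Z) Y = ρ X (B Y Z))
    (horth : ∀ X Y, B (N X) Y = -B X (N Y))
    (htors : ∀ X Y, m (N X) (N Y) = N (m (N X) Y + m X (N Y) - N (m X Y))) (X Z : A) :
    m X (N (N Z)) = N (N (m X Z)) := by
  have h := congrArg (· Z) (lie_mul_sq_eq_zero hsym hnondeg hinv horth htors X)
  simpa [Ring.lie_def, sub_eq_zero] using h

theorem mul_apply_self_eq_neg_sq (hsym : ∀ X Y, B X Y = B Y X)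
    (hnondeg : ∀ a, (∀ b, B a b = 0) → a = 0)
    (hsymPart : ∀ X Y Z, B X (m Y Z) + B X (m Z Y) = ρ X (B Y Z))
    (hiso : ∀ Y, B (N Y) Y = 0)
    (htors : ∀ X Y, m (N X) (N Y) = N (m (N X) Y + m X (N Y) - N (m X Y))) (Y : A) :
    m (N Y) (N Y) = -N (N (m Y Y)) := by
  rw [htors, mul_apply_add_mul_apply_eq_zero hsym hnondeg hsymPart hiso, zero_sub, map_neg]

theorem sq_mul_self_eq_mul_sq_apply (hsym : ∀ X Y, B X Y = B Y X)
    (hnondeg : ∀ a, (∀ b, B a b = 0) → a = 0)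
    (hinv : ∀ X Y Z, B (m X Y) Z + B (m X Z) Y = ρ X (B Y Z))
    (hsymPart : ∀ X Y Z, B X (m Y Z) + B X (m Z Y) = ρ X (B Y Z))
    (hiso : ∀ Y, B (N Y) Y = 0) (horth : ∀ X Y, B (N X) Y = -B X (N Y))
    (htors : ∀ X Y, m (N X) (N Y) = N (m (N X) Y + m X (N Y) - N (m X Y))) (Y : A) :
    N (N (m Y Y)) = m (N (N Y)) Y := by
  have hcomm := mul_apply_sq_apply_comm hsym hnondeg hinv horth htors Y Y
  have hsq := mul_apply_self_eq_neg_sq hsym hnondeg hsymPart hiso htors Y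
  refine eq_of_forall_pairing_eq hnondeg fun W => ?_
  rw [hsym _ W, hsym _ W]
  have hρ := congrArg (ρ W) (horth (N Y) Y)
  have hsqW := congrArg (B W) hsq
  rw [map_neg] at hρ hsqW
  linear_combination (norm := module) -hsymPart W (N (N Y)) Y + congrArg (B W) hcomm - hρ
    - hsymPart W (N Y) (N Y) + (2 : R) • hsqW

def IsIrreducible (m : A →ₗ[R] A →ₗ[R] A) : Prop :=
  ∀ Δ : A →ₗ[R] A, (∀ X Z, m X (Δ Z) = Δ (m X Z)) → (∀ Y, Δ (m Y Y) = m (Δ Y) Y) →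
    ∃ c : R, ∀ x, Δ x = c • x

theorem exists_sq_eq_smul_of_isIrreducible [Invertible (2 : R)] (hsym : ∀ X Y, B X Y = B Y X)
    (hnondeg : ∀ a, (∀ b, B a b = 0) → a = 0)
    (hinv : ∀ X Y Z, B (m X Y) Z + B (m X Z) Y = ρ X (B Y Z))
    (hsymPart : ∀ X Y Z, B X (m Y Z) + B X (m Z Y) = ρ X (B Y Z))
    (hirr : IsIrreducible m) (horth : ∀ X Y, B (N X) Y = -B X (N Y))
    (htors : ∀ X Y, m (N X) (N Y) = N (m (N X) Y + m X (N Y) - N (m X Y))) :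
    ∃ c : R, ∀ x, N (N x) = c • x :=
  hirr (N * N) (mul_apply_sq_apply_comm hsym hnondeg hinv horth htors)
    (sq_mul_self_eq_mul_sq_apply hsym hnondeg hinv hsymPart
      (apply_self_eq_zero_of_skew hsym horth) horth htors)

end CourantAlgebroid

theorem LinearMap.exists_pos_smul_of_sq_eq_smul {A : Type*} [AddCommGroup A] [Module ℝ A]
    {N : A →ₗ[ℝ] A} {c : ℝ} (hN : ∀ x, N (N x) = c • x) :
    ∃ r : ℝ, 0 < r ∧ ∃ J : A →ₗ[ℝ] A, N = r • J ∧
      ((∀ x, J (J x) = -x) ∨ (∀ x, J (J x) = x) ∨ (∀ x, J (J x) = 0)) := by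
  rcases eq_or_ne c 0 with rfl | hc
  · exact ⟨1, one_pos, N, (one_smul ℝ N).symm, Or.inr <| Or.inr fun x => by rw [hN, zero_smul]⟩
  have hr : 0 < √|c| := Real.sqrt_pos.mpr (abs_pos.mpr hc)
  have hJ : ∀ x, ((√|c|)⁻¹ • N) (((√|c|)⁻¹ • N) x) = (c / |c|) • x := fun x => by
    simp only [LinearMap.smul_apply, map_smul, hN, smul_smul]
    congr 1
    field_simp
    rw [Real.sq_sqrt (abs_nonneg c)]
  refine ⟨√|c|, hr, (√|c|)⁻¹ • N, by rw [smul_smul, mul_inv_cancel₀ hr.ne', one_smul], ?_⟩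
  rcases hc.lt_or_gt with hneg | hpos
  · exact Or.inl fun x => by rw [hJ, abs_of_neg hneg, div_neg, div_self hc, neg_one_smul]
  · exact Or.inr <| Or.inl fun x => by rw [hJ, abs_of_pos hpos, div_self hc, one_smul]

open CourantAlgebroid in
theorem orthogonal_nijenhuis_trichotomy_general
    {A F : Type*} [AddCommGroup A] [Module ℝ A] [AddCommGroup F] [Module ℝ F]
    (m : A →ₗ[ℝ] A →ₗ[ℝ] A)           -- the Leibniz product ∘
    (B : A →ₗ[ℝ] A →ₗ[ℝ] F)           -- the pairing ⟨·,·⟩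
    (ρ : A →ₗ[ℝ] F →ₗ[ℝ] F)           -- the anchor acting on scalars
    (hsym : ∀ X Y : A, B X Y = B Y X)
    (hnondeg : ∀ a : A, (∀ b : A, B a b = 0) → a = 0)
    (h4 : ∀ X Y : A, ρ X (B Y Y) = (2 : ℝ) • B X (m Y Y))
    (h5 : ∀ X Y : A, ρ X (B Y Y) = (2 : ℝ) • B (m X Y) Y)
    -- irreducibility
    (hirr : ∀ Δ : A →ₗ[ℝ] A,
      (∀ X Z : A, m X (Δ Z) = Δ (m X Z)) → (∀ Y : A, Δ (m Y Y) = m (Δ Y) Y) →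
      ∃ c : ℝ, ∀ x : A, Δ x = c • x)
    -- N is a nonzero orthogonal Courant-Nijenhuis tensor
    (N : A →ₗ[ℝ] A)
    (horth : ∀ X Y : A, B (N X) Y = - B X (N Y))
    (cN : A → A → A)
    (hcN : ∀ X Y : A, cN X Y = m (N X) Y + m X (N Y) - N (m X Y))
    (torsion_zero : ∀ X Y : A, m (N X) (N Y) - N (cN X Y) = 0) :
    ∃ lam' : ℝ, (∀ x : A, N (N x) = lam' • x) ∧
      ∃ c : ℝ, 0 < c ∧ ∃ J : A →ₗ[ℝ] A, N = c • J ∧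
        ((∀ x : A, J (J x) = -x) ∨ (∀ x : A, J (J x) = x) ∨
         (∀ x : A, J (J x) = 0)) := by
  have hρsym (X Y Z : A) : ρ X (B Y Z) = ρ X (B Z Y) := by rw [hsym]
  have hinv (X Y Z : A) : B (m X Y) Z + B (m X Z) Y = ρ X (B Y Z) :=
    (apply_eq_add_swap_of_apply_self (Φ := B.compr₂ (ρ X)) (Ψ := B ∘ₗ m X)
      (hρsym X) (h5 X) Y Z).symm
  have hsymPart (X Y Z : A) : B X (m Y Z) + B X (m Z Y) = ρ X (B Y Z) :=
    (apply_eq_add_swap_of_apply_self (Φ := B.compr₂ (ρ X)) (Ψ := m.compr₂ (B X))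
      (hρsym X) (h4 X) Y Z).symm
  have htors (X Y : A) : m (N X) (N Y) = N (m (N X) Y + m X (N Y) - N (m X Y)) := by
    rw [← hcN, ← sub_eq_zero, torsion_zero]
  obtain ⟨lam', hlam'⟩ :=
    exists_sq_eq_smul_of_isIrreducible hsym hnondeg hinv hsymPart hirr horth htors
  exact ⟨lam', hlam', LinearMap.exists_pos_smul_of_sq_eq_smul hlam'⟩

/-- On an irreducible Courant algebroid over ℝ, a nonzero
orthogonal (`N* = -N`) Courant-Nijenhuis tensor `N` satisfies `N² = λ'I` for
some `λ' ∈ ℝ`, and consequently `N` is a positive scalar multiple of a tensor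
`J` with `J² = −I`, `J² = I`, or `J² = 0` (a complex, product, or tangent
Courant structure, respectively). -/
theorem orthogonal_nijenhuis_trichotomy
    {A F : Type*} [AddCommGroup A] [Module ℝ A] [AddCommGroup F] [Module ℝ F]
    (m : A →ₗ[ℝ] A →ₗ[ℝ] A)           -- the Leibniz product ∘
    (B : A →ₗ[ℝ] A →ₗ[ℝ] F)           -- the pairing ⟨·,·⟩
    (ρ : A →ₗ[ℝ] F →ₗ[ℝ] F)           -- the anchor acting on scalars
    (jacobi : ∀ X Y Z : A, m (m X Y) Z = m X (m Y Z) - m Y (m X Z))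
    (hsym : ∀ X Y : A, B X Y = B Y X)
    (hnondeg : ∀ a : A, (∀ b : A, B a b = 0) → a = 0)
    (h4 : ∀ X Y : A, ρ X (B Y Y) = (2 : ℝ) • B X (m Y Y))
    (h5 : ∀ X Y : A, ρ X (B Y Y) = (2 : ℝ) • B (m X Y) Y)
    -- irreducibility
    (hirr : ∀ Δ : A →ₗ[ℝ] A,
      (∀ X Z : A, m X (Δ Z) = Δ (m X Z)) → (∀ Y : A, Δ (m Y Y) = m (Δ Y) Y) →
      ∃ c : ℝ, ∀ x : A, Δ x = c • x)
    -- N is a nonzero orthogonal Courant-Nijenhuis tensor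
    (N : A →ₗ[ℝ] A) (hNne : N ≠ 0)
    (horth : ∀ X Y : A, B (N X) Y = - B X (N Y))
    (cN : A → A → A)
    (hcN : ∀ X Y : A, cN X Y = m (N X) Y + m X (N Y) - N (m X Y))
    (torsion_zero : ∀ X Y : A, m (N X) (N Y) - N (cN X Y) = 0) :
    ∃ lam' : ℝ, (∀ x : A, N (N x) = lam' • x) ∧
      ∃ c : ℝ, 0 < c ∧ ∃ J : A →ₗ[ℝ] A, N = c • J ∧
        ((∀ x : A, J (J x) = -x) ∨ (∀ x : A, J (J x) = x) ∨
         (∀ x : A, J (J x) = 0)) :=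
  orthogonal_nijenhuis_trichotomy_general m B ρ hsym hnondeg h4 h5 hirr N horth cN hcN torsion_zero
end
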